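/- arXiv:1307.2845 — 3 statements merged into one kernel-verified Lean document; each statement's English description precedes it below -/
import Mathlib

section
/- Let 𝔦_n be a sequence of pairwise distinct nonzero ideals of 𝒪_F such that each principal congruence subgroup Γ(𝔦_n) is torsion-free. Then log |H¹(Γ(𝔦_n); 𝒪_F²)_tors| / [SL₂(𝒪_F) : Γ(𝔦_n)] → 0 as n → ∞; that is, the torsion in degree-1 group cohomology with tautological coefficients grows subexponentially in the index. -/
set_option maxHeartbeats 1000000
set_option synthInstance.maxHeartbeats 1000000
set_option linter.unusedSectionVars false

noncomputable section

namespace BianchiTorsionH1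

open NumberField

/-! ## The tautological action of `SL₂` on column vectors -/

/-- `SL₂(R)` acts on `R²` by matrix–vector multiplication. -/
instance SL2VecAction {R : Type*} [CommRing R] :
    DistribMulAction (Matrix.SpecialLinearGroup (Fin 2) R) (Fin 2 → R) where
  smul g v := Matrix.mulVec (g : Matrix (Fin 2) (Fin 2) R) v
  one_smul v := by
    show Matrix.mulVec _ v = v
    simp
  mul_smul g h v := by
    show Matrix.mulVec _ v = Matrix.mulVec _ (Matrix.mulVec _ v)
    rw [Matrix.SpecialLinearGroup.coe_mul, ← Matrix.mulVec_mulVec]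
  smul_zero g := by
    show Matrix.mulVec _ 0 = 0
    simp
  smul_add g v w := by
    show Matrix.mulVec _ (v + w) = Matrix.mulVec _ v + Matrix.mulVec _ w
    rw [Matrix.mulVec_add]

/-- The old Mathlib `Monoid.IsTorsionFree` (removed upstream), with its original meaning. -/
def Monoid.IsTorsionFree (G : Type*) [Monoid G] : Prop :=
  ∀ g : G, g ≠ 1 → ¬IsOfFinOrder g

variable (F : Type) [Field F] [NumberField F]

/-- The principal congruence subgroup `Γ(𝔦)`, the kernel of `SL₂(𝒪_F) → SL₂(𝒪_F/𝔦)`. -/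
def GammaPrin (𝔦 : Ideal (𝓞 F)) : Subgroup (Matrix.SpecialLinearGroup (Fin 2) (𝓞 F)) :=
  MonoidHom.ker (Matrix.SpecialLinearGroup.map (Ideal.Quotient.mk 𝔦))

/-- The tautological representation of a subgroup `Γ' ≤ SL₂(𝒪_F)` on `𝒪_F²`, as an object
of `Rep ℤ Γ'`. -/
def tautRep (Γ' : Subgroup (Matrix.SpecialLinearGroup (Fin 2) (𝓞 F))) :
    Rep ℤ ↥Γ' :=
  Rep.of (Representation.ofDistribMulAction ℤ ↥Γ' (Fin 2 → 𝓞 F))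

/-! ## Auxiliary material -/

open groupCohomology Matrix

/-- Upper unipotent element of `SL₂`. -/
def Uni {R : Type*} [CommRing R] (a : R) : Matrix.SpecialLinearGroup (Fin 2) R :=
  ⟨!![1, a; 0, 1], by simp [Matrix.det_fin_two_of]⟩

/-- Lower unipotent element of `SL₂`. -/
def Low {R : Type*} [CommRing R] (a : R) : Matrix.SpecialLinearGroup (Fin 2) R :=
  ⟨!![1, 0; a, 1], by simp [Matrix.det_fin_two_of]⟩

variable {F}

/-- The underlying matrix of an element of a subgroup of `SL₂(𝒪_F)`. -/
def mB {Γ' : Subgroup (Matrix.SpecialLinearGroup (Fin 2) (𝓞 F))} (g : ↥Γ') :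
    Matrix (Fin 2) (Fin 2) (𝓞 F) :=
  ((g : Matrix.SpecialLinearGroup (Fin 2) (𝓞 F)) : Matrix (Fin 2) (Fin 2) (𝓞 F))

lemma rho_eq {Γ' : Subgroup (Matrix.SpecialLinearGroup (Fin 2) (𝓞 F))} (g : ↥Γ')
    (v : Fin 2 → 𝓞 F) : ((tautRep F Γ').ρ g) v = Matrix.mulVec (mB g) v := rfl

lemma Uni_mem {𝔧 : Ideal (𝓞 F)} {a : 𝓞 F} (ha : a ∈ 𝔧) : Uni a ∈ GammaPrin F 𝔧 := by
  rw [GammaPrin, MonoidHom.mem_ker]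
  apply Subtype.ext
  rw [Matrix.SpecialLinearGroup.map_apply_coe]
  show Matrix.map _ (Ideal.Quotient.mk 𝔧) = _
  rw [show ((Uni a : Matrix.SpecialLinearGroup (Fin 2) (𝓞 F)) :
      Matrix (Fin 2) (Fin 2) (𝓞 F)) = !![1, a; 0, 1] from rfl]
  rw [show (!![1, a; 0, 1]).map (Ideal.Quotient.mk 𝔧)
      = !![Ideal.Quotient.mk 𝔧 1, Ideal.Quotient.mk 𝔧 a;
           Ideal.Quotient.mk 𝔧 0, Ideal.Quotient.mk 𝔧 1] by
    funext i j; fin_cases i <;> fin_cases j <;> rfl]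
  rw [Matrix.SpecialLinearGroup.coe_one, Matrix.one_fin_two,
    Ideal.Quotient.eq_zero_iff_mem.2 ha]
  norm_num

lemma Low_mem {𝔧 : Ideal (𝓞 F)} {a : 𝓞 F} (ha : a ∈ 𝔧) : Low a ∈ GammaPrin F 𝔧 := by
  rw [GammaPrin, MonoidHom.mem_ker]
  apply Subtype.ext
  rw [Matrix.SpecialLinearGroup.map_apply_coe]
  show Matrix.map _ (Ideal.Quotient.mk 𝔧) = _
  rw [show ((Low a : Matrix.SpecialLinearGroup (Fin 2) (𝓞 F)) :
      Matrix (Fin 2) (Fin 2) (𝓞 F)) = !![1, 0; a, 1] from rfl]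
  rw [show (!![1, 0; a, 1]).map (Ideal.Quotient.mk 𝔧)
      = !![Ideal.Quotient.mk 𝔧 1, Ideal.Quotient.mk 𝔧 0;
           Ideal.Quotient.mk 𝔧 a, Ideal.Quotient.mk 𝔧 1] by
    funext i j; fin_cases i <;> fin_cases j <;> rfl]
  rw [Matrix.SpecialLinearGroup.coe_one, Matrix.one_fin_two,
    Ideal.Quotient.eq_zero_iff_mem.2 ha]
  norm_num

lemma Uni_mulVec (a : 𝓞 F) (v : Fin 2 → 𝓞 F) :
    Matrix.mulVec ((Uni a : Matrix.SpecialLinearGroup (Fin 2) (𝓞 F)) :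
      Matrix (Fin 2) (Fin 2) (𝓞 F)) v = ![v 0 + a * v 1, v 1] := by
  funext i
  fin_cases i <;>
    simp [Uni, Matrix.mulVec, dotProduct, Fin.sum_univ_two]

lemma Low_mulVec (a : 𝓞 F) (v : Fin 2 → 𝓞 F) :
    Matrix.mulVec ((Low a : Matrix.SpecialLinearGroup (Fin 2) (𝓞 F)) :
      Matrix (Fin 2) (Fin 2) (𝓞 F)) v = ![v 0, a * v 0 + v 1] := by
  funext i
  fin_cases i <;>
    simp [Low, Matrix.mulVec, dotProduct, Fin.sum_univ_two]

variable (F)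

/-- Choice of data representing a torsion class in `H¹`. -/
lemma torsion_data (𝔧 : Ideal (𝓞 F)) {a : 𝓞 F} (haJ : a ∈ 𝔧)
    (t : AddCommGroup.torsion (groupCohomology.H1 (tautRep F (GammaPrin F 𝔧)))) :
    ∃ (z : Fin 2 → 𝓞 F) (m : ℕ) (f : cocycles₁ (tautRep F (GammaPrin F 𝔧)))
      (v : Fin 2 → 𝓞 F),
      0 < m ∧ H1π (tautRep F (GammaPrin F 𝔧)) f = ↑t ∧
      (∀ (g : ↥(GammaPrin F 𝔧)) (i : Fin 2),
        Matrix.mulVec (mB g) v i - v i = (m : 𝓞 F) * f g i) ∧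
      (∀ i, a * v i = (m : 𝓞 F) * z i) := by
  obtain ⟨m, hm0, hms⟩ := isOfFinAddOrder_iff_nsmul_eq_zero.1 t.2
  obtain ⟨f, hf⟩ := (ModuleCat.epi_iff_surjective (H1π (tautRep F (GammaPrin F 𝔧)))).1
    inferInstance (t : groupCohomology.H1 (tautRep F (GammaPrin F 𝔧)))
  have hcob : ⇑(m • f) ∈ coboundaries₁ (tautRep F (GammaPrin F 𝔧)) := by
    rw [← H1π_eq_zero_iff]
    have h1 : H1π (tautRep F (GammaPrin F 𝔧)) (m • f)
        = m • H1π (tautRep F (GammaPrin F 𝔧)) f := by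
      rw [map_nsmul]
    rw [h1, hf, hms]
  obtain ⟨(v : Fin 2 → 𝓞 F), hv⟩ := hcob
  have hv' : (d₀₁ (tautRep F (GammaPrin F 𝔧))).hom v = ((m • f : cocycles₁ _) : _ → _) :=
    hv
  have hfv : ∀ (g : ↥(GammaPrin F 𝔧)) (i : Fin 2),
      Matrix.mulVec (mB g) v i - v i = (m : 𝓞 F) * f g i := by
    intro g i
    have hgi := congrFun (congrFun hv' g) i
    change Matrix.mulVec (mB g) v i - v i = _ at hgi
    have hsm : ((m • f : cocycles₁ (tautRep F (GammaPrin F 𝔧))) : _ → _) g i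
        = (m : 𝓞 F) * f g i := by
      rw [← Nat.cast_smul_eq_nsmul ℤ m f]
      show (((m : ℤ) • f : cocycles₁ (tautRep F (GammaPrin F 𝔧))) : _ → _) g i = _
      rw [show ((((m : ℤ) • f : cocycles₁ (tautRep F (GammaPrin F 𝔧)))) : _ → _)
          = (m : ℤ) • (f : _ → _) from rfl]
      show (m : ℤ) • (f g i) = _
      rw [zsmul_eq_mul]
      push_cast
      ring
    rw [hsm] at hgi
    exact hgi
  refine ⟨![f ⟨Low a, Low_mem haJ⟩ 1, f ⟨Uni a, Uni_mem haJ⟩ 0], m, f, v, hm0, hf, hfv, ?_⟩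
  intro i
  fin_cases i
  · have h := hfv ⟨Low a, Low_mem haJ⟩ 1
    rw [show mB (⟨Low a, Low_mem haJ⟩ : ↥(GammaPrin F 𝔧))
        = ((Low a : Matrix.SpecialLinearGroup (Fin 2) (𝓞 F)) :
          Matrix (Fin 2) (Fin 2) (𝓞 F)) from rfl, Low_mulVec] at h
    simpa using h
  · have h := hfv ⟨Uni a, Uni_mem haJ⟩ 0
    rw [show mB (⟨Uni a, Uni_mem haJ⟩ : ↥(GammaPrin F 𝔧))
        = ((Uni a : Matrix.SpecialLinearGroup (Fin 2) (𝓞 F)) :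
          Matrix (Fin 2) (Fin 2) (𝓞 F)) from rfl, Uni_mulVec] at h
    simpa using h

/-- The key injection from the torsion of `H¹` into `(𝒪_F/(N))²`. -/
lemma exists_injection (𝔧 : Ideal (𝓞 F)) (h𝔧 : 𝔧 ≠ ⊥) :
    ∃ Φ : AddCommGroup.torsion (groupCohomology.H1 (tautRep F (GammaPrin F 𝔧))) →
      (Fin 2 → 𝓞 F ⧸ Ideal.span {((Ideal.absNorm 𝔧 : ℕ) : 𝓞 F)}),
      Function.Injective Φ := by
  classical
  set a : 𝓞 F := ((Ideal.absNorm 𝔧 : ℕ) : 𝓞 F) with ha_def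
  have haJ : a ∈ 𝔧 := Ideal.absNorm_mem 𝔧
  have ha0 : a ≠ 0 := by
    simp only [ha_def, Ne, Nat.cast_eq_zero]
    exact fun h => h𝔧 (Ideal.absNorm_eq_zero_iff.1 h)
  refine ⟨fun t => fun i =>
    Ideal.Quotient.mk (Ideal.span {a}) ((torsion_data F 𝔧 haJ t).choose i), ?_⟩
  intro t t' hΦ
  obtain ⟨m, f, v, hm, hmk, hfv, hz⟩ := (torsion_data F 𝔧 haJ t).choose_spec
  obtain ⟨m', f', v', hm', hmk', hfv', hz'⟩ := (torsion_data F 𝔧 haJ t').choose_spec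
  set z := (torsion_data F 𝔧 haJ t).choose with hzdef
  set z' := (torsion_data F 𝔧 haJ t').choose with hz'def
  -- extract a difference vector
  have hu : ∀ i, ∃ c, z i - z' i = a * c := by
    intro i
    have h := congrFun hΦ i
    rw [Ideal.Quotient.eq] at h
    exact Ideal.mem_span_singleton.1 h
  choose u hu using hu
  -- nonzero scalar
  have hmne : (m : 𝓞 F) ≠ 0 := Nat.cast_ne_zero.2 (Nat.pos_iff_ne_zero.1 hm)
  have hmne' : (m' : 𝓞 F) ≠ 0 := Nat.cast_ne_zero.2 (Nat.pos_iff_ne_zero.1 hm')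
  have hmm : ((m : 𝓞 F) * (m' : 𝓞 F)) * a ≠ 0 := mul_ne_zero (mul_ne_zero hmne hmne') ha0
  -- show the two torsion classes agree
  apply Subtype.ext
  rw [← hmk, ← hmk']
  rw [H1π_eq_iff]
  refine ⟨u, ?_⟩
  show (d₀₁ (tautRep F (GammaPrin F 𝔧))).hom u = (⇑f - ⇑f' : _ → _)
  funext g i
  change Matrix.mulVec (mB g) u i - u i = _
  have hsub : (⇑f - ⇑f' : _ → _) g i
      = f g i - f' g i := rfl
  rw [hsub]
  show Matrix.mulVec (mB g) u i - u i = f g i - f' g i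
  -- pointwise identities
  have hav : a • v = (m : 𝓞 F) • z := by
    funext j
    simpa [smul_eq_mul] using hz j
  have hav' : a • v' = (m' : 𝓞 F) • z' := by
    funext j
    simpa [smul_eq_mul] using hz' j
  have e6 : a * Matrix.mulVec (mB g) v i = (m : 𝓞 F) * Matrix.mulVec (mB g) z i := by
    have h6 : a • Matrix.mulVec (mB g) v = (m : 𝓞 F) • Matrix.mulVec (mB g) z := by
      rw [← Matrix.mulVec_smul, ← Matrix.mulVec_smul, hav]
    simpa [smul_eq_mul] using congrFun h6 i
  have e7 : a * Matrix.mulVec (mB g) v' i = (m' : 𝓞 F) * Matrix.mulVec (mB g) z' i := by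
    have h7 : a • Matrix.mulVec (mB g) v' = (m' : 𝓞 F) • Matrix.mulVec (mB g) z' := by
      rw [← Matrix.mulVec_smul, ← Matrix.mulVec_smul, hav']
    simpa [smul_eq_mul] using congrFun h7 i
  have e8 : Matrix.mulVec (mB g) z i - Matrix.mulVec (mB g) z' i
      = a * Matrix.mulVec (mB g) u i := by
    have h8 : Matrix.mulVec (mB g) z - Matrix.mulVec (mB g) z'
        = a • Matrix.mulVec (mB g) u := by
      have hzz : z - z' = a • u := by
        funext j
        simpa [smul_eq_mul] using hu j
      rw [← Matrix.mulVec_sub, hzz, Matrix.mulVec_smul]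
    simpa [smul_eq_mul] using congrFun h8 i
  have e1 := hfv g i
  have e2 := hfv' g i
  have e3 := hz i
  have e4 := hz' i
  have e5 := hu i
  symm
  apply mul_left_cancel₀ hmm
  linear_combination (-((m' : 𝓞 F) * a)) * e1 + ((m : 𝓞 F) * a) * e2 + (m' : 𝓞 F) * e6
    - (m' : 𝓞 F) * e3 - (m : 𝓞 F) * e7 + (m : 𝓞 F) * e4
    + ((m : 𝓞 F) * (m' : 𝓞 F)) * e8 - ((m : 𝓞 F) * (m' : 𝓞 F)) * e5

/-- Cardinality bound on the torsion subgroup of `H¹`. -/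
lemma card_torsion_bound (hdeg : Module.finrank ℚ F = 2) (𝔧 : Ideal (𝓞 F)) (h𝔧 : 𝔧 ≠ ⊥) :
    Finite (AddCommGroup.torsion (groupCohomology.H1 (tautRep F (GammaPrin F 𝔧)))) ∧
    Nat.card (AddCommGroup.torsion (groupCohomology.H1 (tautRep F (GammaPrin F 𝔧))))
      ≤ (Ideal.absNorm 𝔧) ^ 4 := by
  obtain ⟨Φ, hΦ⟩ := exists_injection F 𝔧 h𝔧
  have ha0 : ((Ideal.absNorm 𝔧 : ℕ) : 𝓞 F) ≠ 0 := by
    simp only [Ne, Nat.cast_eq_zero]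
    exact fun h => h𝔧 (Ideal.absNorm_eq_zero_iff.1 h)
  have hspan : Ideal.span {((Ideal.absNorm 𝔧 : ℕ) : 𝓞 F)} ≠ ⊥ := by
    simpa [Ideal.span_singleton_eq_bot] using ha0
  have habs : Ideal.absNorm (Ideal.span {((Ideal.absNorm 𝔧 : ℕ) : 𝓞 F)}) ≠ 0 := by
    simpa [Ideal.absNorm_eq_zero_iff] using hspan
  haveI hfinq : Finite (𝓞 F ⧸ Ideal.span {((Ideal.absNorm 𝔧 : ℕ) : 𝓞 F)}) :=
    (Ideal.absNorm_ne_zero_iff _).mp habs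
  haveI : Finite (Fin 2 → 𝓞 F ⧸ Ideal.span {((Ideal.absNorm 𝔧 : ℕ) : 𝓞 F)}) := Pi.finite
  haveI hfinT : Finite
      (AddCommGroup.torsion (groupCohomology.H1 (tautRep F (GammaPrin F 𝔧)))) :=
    Finite.of_injective Φ hΦ
  refine ⟨hfinT, ?_⟩
  have hcard1 : Nat.card (AddCommGroup.torsion
        (groupCohomology.H1 (tautRep F (GammaPrin F 𝔧))))
      ≤ Nat.card (Fin 2 → 𝓞 F ⧸ Ideal.span {((Ideal.absNorm 𝔧 : ℕ) : 𝓞 F)}) :=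
    Nat.card_le_card_of_injective Φ hΦ
  have hcard2 : Nat.card (Fin 2 → 𝓞 F ⧸ Ideal.span {((Ideal.absNorm 𝔧 : ℕ) : 𝓞 F)})
      = (Nat.card (𝓞 F ⧸ Ideal.span {((Ideal.absNorm 𝔧 : ℕ) : 𝓞 F)})) ^ 2 := by
    rw [Nat.card_pi, Finset.prod_const, Finset.card_univ, Fintype.card_fin]
  have hcard3 : Nat.card (𝓞 F ⧸ Ideal.span {((Ideal.absNorm 𝔧 : ℕ) : 𝓞 F)})
      = (Ideal.absNorm 𝔧) ^ 2 := by
    have h1 : Nat.card (𝓞 F ⧸ Ideal.span {((Ideal.absNorm 𝔧 : ℕ) : 𝓞 F)})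
        = Ideal.absNorm (Ideal.span {((Ideal.absNorm 𝔧 : ℕ) : 𝓞 F)}) :=
      ((Ideal.absNorm_apply _).trans (Submodule.cardQuot_apply _)).symm
    rw [h1, Ideal.absNorm_span_singleton]
    have h2 : ((Ideal.absNorm 𝔧 : ℕ) : 𝓞 F) = algebraMap ℤ (𝓞 F) ((Ideal.absNorm 𝔧 : ℤ)) := by
      simp
    rw [h2, Algebra.norm_algebraMap_of_basis (RingOfIntegers.basis F)]
    have h3 : Fintype.card (Module.Free.ChooseBasisIndex ℤ (𝓞 F)) = 2 := by
      rw [← Module.finrank_eq_card_chooseBasisIndex, RingOfIntegers.rank, hdeg]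
    rw [h3]
    simp [Int.natAbs_pow]
  calc Nat.card (AddCommGroup.torsion (groupCohomology.H1 (tautRep F (GammaPrin F 𝔧))))
      ≤ (Nat.card (𝓞 F ⧸ Ideal.span {((Ideal.absNorm 𝔧 : ℕ) : 𝓞 F)})) ^ 2 := by
        rw [← hcard2]; exact hcard1
    _ = ((Ideal.absNorm 𝔧) ^ 2) ^ 2 := by rw [hcard3]
    _ = (Ideal.absNorm 𝔧) ^ 4 := by ring

/-- Lower bound for the index of the principal congruence subgroup. -/
lemma absNorm_le_index (𝔧 : Ideal (𝓞 F)) (h𝔧 : 𝔧 ≠ ⊥) :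
    Ideal.absNorm 𝔧 ≤ (GammaPrin F 𝔧).index := by
  classical
  have habs : Ideal.absNorm 𝔧 ≠ 0 := fun h => h𝔧 (Ideal.absNorm_eq_zero_iff.1 h)
  haveI hfinq : Finite (𝓞 F ⧸ 𝔧) := (Ideal.absNorm_ne_zero_iff 𝔧).mp habs
  haveI hfinM : Finite (Matrix (Fin 2) (Fin 2) (𝓞 F ⧸ 𝔧)) := by infer_instance
  haveI hfinSL : Finite (Matrix.SpecialLinearGroup (Fin 2) (𝓞 F ⧸ 𝔧)) :=
    Finite.of_injective
      (fun g : Matrix.SpecialLinearGroup (Fin 2) (𝓞 F ⧸ 𝔧) =>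
        (g : Matrix (Fin 2) (Fin 2) (𝓞 F ⧸ 𝔧)))
      Subtype.val_injective
  haveI : Finite ((Matrix.SpecialLinearGroup.map (n := Fin 2) (Ideal.Quotient.mk 𝔧)).range) :=
    by infer_instance
  have hidx : (GammaPrin F 𝔧).index
      = Nat.card (Matrix.SpecialLinearGroup.map (n := Fin 2) (Ideal.Quotient.mk 𝔧)).range :=
    Subgroup.index_ker _
  set s : (𝓞 F ⧸ 𝔧) → 𝓞 F := Function.surjInv Ideal.Quotient.mk_surjective with hs_def
  have hsec : ∀ x, Ideal.Quotient.mk 𝔧 (s x) = x :=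
    fun x => Function.surjInv_eq Ideal.Quotient.mk_surjective x
  have hinj : Function.Injective (fun x : 𝓞 F ⧸ 𝔧 =>
      (⟨Matrix.SpecialLinearGroup.map (Ideal.Quotient.mk 𝔧) (Uni (s x)),
        ⟨Uni (s x), rfl⟩⟩ :
        (Matrix.SpecialLinearGroup.map (n := Fin 2) (Ideal.Quotient.mk 𝔧)).range)) := by
    intro x y h
    have h2 := congrArg (fun w : (Matrix.SpecialLinearGroup.map (n := Fin 2) (Ideal.Quotient.mk 𝔧)).range
      => ((w : Matrix.SpecialLinearGroup (Fin 2) (𝓞 F ⧸ 𝔧)) :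
          Matrix (Fin 2) (Fin 2) (𝓞 F ⧸ 𝔧)) 0 1) h
    simp only at h2
    have h3 : Ideal.Quotient.mk 𝔧 (s x) = Ideal.Quotient.mk 𝔧 (s y) := h2
    rw [hsec, hsec] at h3
    exact h3
  have hcard : Nat.card (𝓞 F ⧸ 𝔧)
      ≤ Nat.card (Matrix.SpecialLinearGroup.map (n := Fin 2) (Ideal.Quotient.mk 𝔧)).range :=
    Nat.card_le_card_of_injective _ hinj
  have hNq : Ideal.absNorm 𝔧 = Nat.card (𝓞 F ⧸ 𝔧) :=
    (Ideal.absNorm_apply _).trans (Submodule.cardQuot_apply _)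
  rw [hidx, hNq]
  exact hcard

/-- Let `F` be an imaginary quadratic field and `𝔦_n` a sequence of pairwise
distinct nonzero ideals of `𝒪_F` with each `Γ(𝔦_n)` torsion-free.  Then
`log |H¹(Γ(𝔦_n); 𝒪_F²)_tors| / [SL₂(𝒪_F) : Γ(𝔦_n)] → 0`: the torsion of degree-1 group
cohomology with tautological coefficients grows subexponentially in the index. -/
theorem torsion_H1_cohomology_subexponential
    (hdeg : Module.finrank ℚ F = 2)
    (hcomplex : ∀ v : InfinitePlace F, v.IsComplex)
    (𝔦 : ℕ → Ideal (𝓞 F)) (hdist : Function.Injective 𝔦) (hbot : ∀ n, 𝔦 n ≠ ⊥)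
    (htf : ∀ n, Monoid.IsTorsionFree ↥(GammaPrin F (𝔦 n))) :
    Filter.Tendsto
      (fun n =>
        Real.log (Nat.card
          (AddCommGroup.torsion (groupCohomology.H1 (tautRep F (GammaPrin F (𝔦 n)))))) /
          ((GammaPrin F (𝔦 n)).index : ℝ))
      Filter.atTop (nhds 0) := by
  classical
  set N : ℕ → ℕ := fun n => Ideal.absNorm (𝔦 n) with hN_def
  have hN0 : ∀ n, N n ≠ 0 := fun n h => hbot n (Ideal.absNorm_eq_zero_iff.1 h)
  have hN1 : ∀ n, 1 ≤ N n := fun n => Nat.one_le_iff_ne_zero.2 (hN0 n)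
  have hidx : ∀ n, N n ≤ (GammaPrin F (𝔦 n)).index :=
    fun n => absNorm_le_index F (𝔦 n) (hbot n)
  have hbound := fun n => card_torsion_bound F hdeg (𝔦 n) (hbot n)
  -- nonnegativity
  have h0 : ∀ n, 0 ≤ Real.log (Nat.card
      (AddCommGroup.torsion (groupCohomology.H1 (tautRep F (GammaPrin F (𝔦 n)))))) /
      ((GammaPrin F (𝔦 n)).index : ℝ) := by
    intro n
    apply div_nonneg (Real.log_natCast_nonneg _) (Nat.cast_nonneg _)
  -- upper bound
  have hle : ∀ n, Real.log (Nat.card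
      (AddCommGroup.torsion (groupCohomology.H1 (tautRep F (GammaPrin F (𝔦 n)))))) /
      ((GammaPrin F (𝔦 n)).index : ℝ)
      ≤ (4 * Real.log (N n)) / (N n : ℝ) := by
    intro n
    have hNpos : (0 : ℝ) < (N n : ℝ) := by exact_mod_cast (hN1 n)
    have hidxR : (N n : ℝ) ≤ ((GammaPrin F (𝔦 n)).index : ℝ) := by exact_mod_cast hidx n
    have hlog : Real.log (Nat.card
        (AddCommGroup.torsion (groupCohomology.H1 (tautRep F (GammaPrin F (𝔦 n))))))
        ≤ 4 * Real.log (N n) := by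
      have hcard := (hbound n).2
      have : Real.log (Nat.card
          (AddCommGroup.torsion (groupCohomology.H1 (tautRep F (GammaPrin F (𝔦 n))))))
          ≤ Real.log (((N n) ^ 4 : ℕ) : ℝ) := by
        rcases Nat.eq_zero_or_pos (Nat.card
          (AddCommGroup.torsion (groupCohomology.H1 (tautRep F (GammaPrin F (𝔦 n)))))) with h | h
        · rw [h]
          simpa using Real.log_natCast_nonneg _
        · apply Real.log_le_log (by exact_mod_cast h)
          exact_mod_cast hcard
      calc Real.log (Nat.card
            (AddCommGroup.torsion (groupCohomology.H1 (tautRep F (GammaPrin F (𝔦 n))))))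
          ≤ Real.log (((N n) ^ 4 : ℕ) : ℝ) := this
        _ = 4 * Real.log (N n) := by
            push_cast
            rw [Real.log_pow]
            norm_num
    calc Real.log (Nat.card
          (AddCommGroup.torsion (groupCohomology.H1 (tautRep F (GammaPrin F (𝔦 n)))))) /
          ((GammaPrin F (𝔦 n)).index : ℝ)
        ≤ Real.log (Nat.card
          (AddCommGroup.torsion (groupCohomology.H1 (tautRep F (GammaPrin F (𝔦 n)))))) /
          (N n : ℝ) := by
          exact div_le_div_of_nonneg_left (Real.log_natCast_nonneg _) hNpos hidxR
      _ ≤ (4 * Real.log (N n)) / (N n : ℝ) :=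
          div_le_div_of_nonneg_right hlog (le_of_lt hNpos)
  -- the norms tend to infinity
  have hNat : Filter.Tendsto N Filter.atTop Filter.atTop := by
    rw [Filter.tendsto_atTop]
    intro b
    rw [← Nat.cofinite_eq_atTop, Filter.eventually_cofinite]
    have hsub : {n | ¬ b ≤ N n} ⊆ 𝔦 ⁻¹' {I | Ideal.absNorm I ≤ b} := by
      intro n hn
      simp only [Set.mem_setOf_eq, not_le] at hn ⊢
      exact le_of_lt hn
    exact ((Ideal.finite_setOf_absNorm_le b).preimage hdist.injOn).subset hsub
  have hNR : Filter.Tendsto (fun n => (N n : ℝ)) Filter.atTop Filter.atTop :=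
    tendsto_natCast_atTop_atTop.comp hNat
  have hg : Filter.Tendsto (fun x : ℝ => 4 * Real.log x / x) Filter.atTop (nhds 0) := by
    have h := Real.isLittleO_log_id_atTop.tendsto_div_nhds_zero
    have h4 := h.const_mul (4 : ℝ)
    simp only [mul_zero] at h4
    simpa [mul_div_assoc, Function.comp] using h4
  have hgN : Filter.Tendsto (fun n => 4 * Real.log (N n) / (N n : ℝ))
      Filter.atTop (nhds 0) := hg.comp hNR
  exact squeeze_zero h0 hle hgN

end BianchiTorsionH1
end
end

section
/- Let p ≥ 5 be a prime, let 𝔽 be the field with p² elements, and let L = 𝔰𝔩₂(𝔽) be the Lie algebra of traceless 2×2 matrices over 𝔽, regarded as a Lie algebra over the prime field 𝔽_p (of dimension 6 over 𝔽_p). If 𝔥 is a proper 𝔽_p-Lie subalgebra of L and S ⊆ 𝔥 is a set of nonzero nilpotent elements (x ≠ 0 with x² = 0 as a matrix) such that [x, y] ≠ 0 for any two distinct x, y ∈ S, then |S| ≤ p + 1. -/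
section CompLemmas

variable {K : Type*} [Field K]

private lemma sq_zero_entry' (x : Matrix (Fin 2) (Fin 2) K) (hx : x * x = 0) :
    x 0 0 * x 0 0 + x 0 1 * x 1 0 = 0 := by
  have := congrFun (congrFun hx 0) 0
  simpa [Matrix.mul_apply, Fin.sum_univ_two] using this

private lemma trace_entry' (x : Matrix (Fin 2) (Fin 2) K) (ht : Matrix.trace x = 0) :
    x 1 1 = -x 0 0 := by
  rw [Matrix.trace_fin_two] at ht; linear_combination ht

private lemma xmx' (x m : Matrix (Fin 2) (Fin 2) K)
    (ht : Matrix.trace x = 0) (hx : x * x = 0) :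
    x * m * x = Matrix.trace (x * m) • x := by
  have hA := trace_entry' x ht
  have hx2 := sq_zero_entry' x hx
  ext i j
  fin_cases i <;> fin_cases j <;>
    simp [Matrix.mul_apply, Matrix.trace_fin_two, Fin.sum_univ_two, hA, smul_eq_mul]
  · linear_combination (m 1 1) * hx2
  · linear_combination (-(m 0 1)) * hx2
  · linear_combination (-(m 1 0)) * hx2
  · linear_combination (m 0 0) * hx2

private lemma comm_of_trace_zero' (x y : Matrix (Fin 2) (Fin 2) K)
    (htx : Matrix.trace x = 0) (hty : Matrix.trace y = 0)
    (hx : x * x = 0) (hy : y * y = 0) (ht : Matrix.trace (x * y) = 0) :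
    x * y - y * x = 0 := by
  have hA := trace_entry' x htx
  have hD := trace_entry' y hty
  have hx2 := sq_zero_entry' x hx
  have hy2 := sq_zero_entry' y hy
  have hT : 2 * (x 0 0 * y 0 0) + x 0 1 * y 1 0 + x 1 0 * y 0 1 = 0 := by
    rw [Matrix.trace_fin_two] at ht
    simp [Matrix.mul_apply, Fin.sum_univ_two, hA, hD] at ht
    linear_combination ht
  ext i j
  fin_cases i <;> fin_cases j <;>
      simp [Matrix.mul_apply, Fin.sum_univ_two, hA, hD] <;>
      refine sub_eq_zero.mp ((pow_eq_zero_iff two_ne_zero).mp ?_)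
  · linear_combination (x 0 1 * y 1 0 + x 1 0 * y 0 1 - 2 * (x 0 0 * y 0 0)) * hT +
      (4 * x 0 0 ^ 2) * hy2 + (-4 * (y 0 1 * y 1 0)) * hx2
  · linear_combination (4 * y 0 1 ^ 2) * hx2 + (4 * x 0 1 ^ 2) * hy2 +
      (-4 * (x 0 1 * y 0 1)) * hT
  · linear_combination (4 * y 1 0 ^ 2) * hx2 + (4 * x 1 0 ^ 2) * hy2 +
      (-4 * (x 1 0 * y 1 0)) * hT
  · linear_combination (x 0 1 * y 1 0 + x 1 0 * y 0 1 - 2 * (x 0 0 * y 0 0)) * hT +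
      (4 * x 0 0 ^ 2) * hy2 + (-4 * (y 0 1 * y 1 0)) * hx2

private lemma expand_traceless' (x y z : Matrix (Fin 2) (Fin 2) K)
    (htx : Matrix.trace x = 0) (hty : Matrix.trace y = 0) (htz : Matrix.trace z = 0)
    (hx : x * x = 0) (hy : y * y = 0) :
    (2 * Matrix.trace (x * y) ^ 2) • z =
      (2 * Matrix.trace (x * y) * Matrix.trace (z * y)) • x +
      (2 * Matrix.trace (x * y) * Matrix.trace (z * x)) • y +
      Matrix.trace (z * (x * y - y * x)) • (x * y - y * x) := by
  have hA := trace_entry' x htx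
  have hD := trace_entry' y hty
  have hG := trace_entry' z htz
  have hx2 := sq_zero_entry' x hx
  have hy2 := sq_zero_entry' y hy
  ext i j
  fin_cases i <;> fin_cases j <;>
      simp [Matrix.mul_apply, Matrix.trace_fin_two, Fin.sum_univ_two, hA, hD, hG,
        smul_eq_mul, Matrix.sub_apply]
  · linear_combination ((-8) * y 0 0 * y 0 0 * z 0 0 + (-4) * y 0 0 * y 0 1 * z 1 0 +
      (-4) * y 0 0 * y 1 0 * z 0 1) * hx2 + ((-4) * x 0 0 * x 0 1 * z 1 0 +
      (-4) * x 0 0 * x 1 0 * z 0 1 + 8 * x 0 1 * x 1 0 * z 0 0) * hy2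
  · linear_combination (8 * y 0 0 * y 0 0 * z 0 1 + (-8) * y 0 0 * y 0 1 * z 0 0 +
      (-4) * y 0 1 * y 0 1 * z 1 0 + 4 * y 0 1 * y 1 0 * z 0 1) * hx2 +
      ((-8) * x 0 0 * x 0 1 * z 0 0 + (-4) * x 0 1 * x 0 1 * z 1 0 +
      (-4) * x 0 1 * x 1 0 * z 0 1) * hy2
  · linear_combination (8 * y 0 0 * y 0 0 * z 1 0 + (-8) * y 0 0 * y 1 0 * z 0 0 +
      4 * y 0 1 * y 1 0 * z 1 0 + (-4) * y 1 0 * y 1 0 * z 0 1) * hx2 +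
      ((-8) * x 0 0 * x 1 0 * z 0 0 + (-4) * x 0 1 * x 1 0 * z 1 0 +
      (-4) * x 1 0 * x 1 0 * z 0 1) * hy2
  · linear_combination (8 * y 0 0 * y 0 0 * z 0 0 + 4 * y 0 0 * y 0 1 * z 1 0 +
      4 * y 0 0 * y 1 0 * z 0 1) * hx2 + (4 * x 0 0 * x 0 1 * z 1 0 +
      4 * x 0 0 * x 1 0 * z 0 1 + (-8) * x 0 1 * x 1 0 * z 0 0) * hy2

private lemma conic_rel' (x y z : Matrix (Fin 2) (Fin 2) K)
    (htx : Matrix.trace x = 0) (hty : Matrix.trace y = 0) (htz : Matrix.trace z = 0)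
    (hx : x * x = 0) (hy : y * y = 0) (hz : z * z = 0) :
    Matrix.trace (z * (x * y - y * x)) ^ 2 +
      4 * Matrix.trace (x * y) * Matrix.trace (z * y) * Matrix.trace (z * x) = 0 := by
  have hA := trace_entry' x htx
  have hD := trace_entry' y hty
  have hG := trace_entry' z htz
  have hx2 := sq_zero_entry' x hx
  have hy2 := sq_zero_entry' y hy
  have hz2 := sq_zero_entry' z hz
  simp only [Matrix.trace_fin_two, Matrix.mul_apply, Fin.sum_univ_two, Matrix.sub_apply,
    hA, hD, hG]
  linear_combination (32 * y 0 0 * y 0 0 * z 0 0 * z 0 0 + 16 * y 0 0 * y 0 1 * z 0 0 * z 1 0 +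
      16 * y 0 0 * y 1 0 * z 0 0 * z 0 1 + 4 * y 0 1 * y 0 1 * z 1 0 * z 1 0 +
      (-8) * y 0 1 * y 1 0 * z 0 1 * z 1 0 + 4 * y 1 0 * y 1 0 * z 0 1 * z 0 1) * hx2 +
    (16 * x 0 0 * x 0 1 * z 0 0 * z 1 0 + 16 * x 0 0 * x 1 0 * z 0 0 * z 0 1 +
      4 * x 0 1 * x 0 1 * z 1 0 * z 1 0 + (-32) * x 0 1 * x 1 0 * z 0 0 * z 0 0 +
      (-8) * x 0 1 * x 1 0 * z 0 1 * z 1 0 + 4 * x 1 0 * x 1 0 * z 0 1 * z 0 1) * hy2 +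
    (16 * x 0 0 * x 0 1 * y 0 0 * y 1 0 + 16 * x 0 0 * x 1 0 * y 0 0 * y 0 1 +
      4 * x 0 1 * x 0 1 * y 1 0 * y 1 0 + 24 * x 0 1 * x 1 0 * y 0 1 * y 1 0 +
      4 * x 1 0 * x 1 0 * y 0 1 * y 0 1) * hz2

private lemma xh0' (x y : Matrix (Fin 2) (Fin 2) K) (htx : Matrix.trace x = 0) (hx : x * x = 0) :
    x * (x * y - y * x) = (-Matrix.trace (x * y)) • x := by
  rw [mul_sub, ← mul_assoc, ← mul_assoc, hx, zero_mul, xmx' x y htx hx, zero_sub, neg_smul]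

private lemma h0x' (x y : Matrix (Fin 2) (Fin 2) K) (htx : Matrix.trace x = 0) (hx : x * x = 0) :
    (x * y - y * x) * x = Matrix.trace (x * y) • x := by
  rw [sub_mul, mul_assoc y x x, hx, mul_zero, xmx' x y htx hx, sub_zero]

private lemma yh0' (x y : Matrix (Fin 2) (Fin 2) K) (hty : Matrix.trace y = 0) (hy : y * y = 0) :
    y * (x * y - y * x) = Matrix.trace (x * y) • y := by
  rw [mul_sub, ← mul_assoc, ← mul_assoc, hy, zero_mul, sub_zero, xmx' y x hty hy,
    Matrix.trace_mul_comm]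

private lemma h0y' (x y : Matrix (Fin 2) (Fin 2) K) (hty : Matrix.trace y = 0) (hy : y * y = 0) :
    (x * y - y * x) * y = (-Matrix.trace (x * y)) • y := by
  rw [sub_mul, mul_assoc x y y, hy, mul_zero, zero_sub, xmx' y x hty hy,
    Matrix.trace_mul_comm, neg_smul]

private lemma dbl' (x z : Matrix (Fin 2) (Fin 2) K) (htx : Matrix.trace x = 0) (hx : x * x = 0) :
    x * (x * z - z * x) - (x * z - z * x) * x = (-(2 * Matrix.trace (x * z))) • x := by
  have h1 : x * (x * z - z * x) - (x * z - z * x) * x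
      = x * x * z + z * (x * x) - (x * z * x + x * z * x) := by noncomm_ring
  rw [h1, hx, zero_mul, mul_zero, zero_add, xmx' x z htx hx, zero_sub, ← two_smul K,
    smul_smul, ← neg_smul]

end CompLemmas

attribute [local instance 100] LieRing.ofAssociativeRing

/-- The Lie algebra `𝔰𝔩₂(𝔽)` of traceless `2×2` matrices over the field `𝔽` with `p²`
elements, viewed as a Lie algebra over the prime field `𝔽_p` by restriction of scalars. -/
def sl2GaloisField (p : ℕ) [Fact p.Prime] :
    LieSubalgebra (ZMod p) (Matrix (Fin 2) (Fin 2) (GaloisField p 2)) where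
  carrier := {x | Matrix.trace x = 0}
  add_mem' := by
    intro a b ha hb
    simp only [Set.mem_setOf_eq] at *
    simp [Matrix.trace_add, ha, hb]
  zero_mem' := by simp
  smul_mem' := by
    intro c x hx
    simp only [Set.mem_setOf_eq] at *
    simp [Matrix.trace_smul, hx]
  lie_mem' := by
    intro x y hx hy
    simp only [Set.mem_setOf_eq] at *
    simp [Ring.lie_def, Matrix.trace_sub, Matrix.trace_mul_comm x y]

/-- Let `p ≥ 5` be prime, `𝔽` the field with `p²` elements, and
`L = 𝔰𝔩₂(𝔽)` viewed as an `𝔽_p`-Lie algebra.  A proper `𝔽_p`-Lie subalgebra of `L` cannot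
contain more than `p + 1` nonzero nilpotent elements whose pairwise brackets are nonzero. -/
theorem card_nilpotent_nonbracketing_le_of_proper_sl2
    (p : ℕ) [Fact p.Prime] (hp : 5 ≤ p)
    (𝔥 : LieSubalgebra (ZMod p) (Matrix (Fin 2) (Fin 2) (GaloisField p 2)))
    (h𝔥 : 𝔥 ≤ sl2GaloisField p) (h𝔥' : 𝔥 ≠ sl2GaloisField p)
    (S : Set (Matrix (Fin 2) (Fin 2) (GaloisField p 2))) (hS : S ⊆ (𝔥 : Set _))
    (hnilp : ∀ x ∈ S, x ≠ 0 ∧ x ^ 2 = 0)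
    (hnc : ∀ x ∈ S, ∀ y ∈ S, x ≠ y → x * y - y * x ≠ 0) :
    Nat.card S ≤ p + 1 := by
  classical
  by_cases hsub : S.Subsingleton
  · have h1 : Nat.card S = S.ncard := Nat.card_coe_set_eq S
    have h2 : S.ncard ≤ 1 := (Set.ncard_le_one hsub.finite).mpr fun a ha b hb => hsub ha hb
    have : 2 ≤ p + 1 := by omega
    omega
  rw [Set.not_subsingleton_iff] at hsub
  obtain ⟨x, hxS, y, hyS, hxy⟩ := hsub
  -- basic membership facts
  have hmem : ∀ z ∈ S, Matrix.trace z = 0 ∧ z * z = 0 ∧ z ∈ 𝔥 := by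
    intro z hz
    refine ⟨h𝔥 (hS hz), ?_, hS hz⟩
    have h2 := (hnilp z hz).2
    rwa [pow_two] at h2
  obtain ⟨htx, hx, hx𝔥⟩ := hmem x hxS
  obtain ⟨hty, hy, hy𝔥⟩ := hmem y hyS
  set τ : GaloisField p 2 := Matrix.trace (x * y) with hτdef
  set h₀ : Matrix (Fin 2) (Fin 2) (GaloisField p 2) := x * y - y * x with hh₀def
  have hτ0 : τ ≠ 0 := fun h =>
    hnc x hxS y hyS hxy (comm_of_trace_zero' x y htx hty hx hy h)
  have hp2 : (p : ℕ) ≠ 2 := by omega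
  have h2F : (2 : GaloisField p 2) ≠ 0 := by
    have : ((2 : ℕ) : GaloisField p 2) ≠ 0 := by
      rw [Ne, CharP.cast_eq_zero_iff (GaloisField p 2) p]
      intro hdvd
      have := Nat.le_of_dvd (by norm_num) hdvd
      omega
    simpa using this
  have hh0𝔥 : h₀ ∈ 𝔥 := by
    have := 𝔥.lie_mem hx𝔥 hy𝔥
    rwa [Ring.lie_def] at this
  set FP := (algebraMap (ZMod p) (GaloisField p 2)).fieldRange with hFPdef
  have h2FP : (2 : GaloisField p 2) ∈ FP := ⟨2, map_ofNat _ 2⟩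
  -- the span lemma
  have hspan : ∀ a : GaloisField p 2, a ∉ FP → ∀ w : Matrix (Fin 2) (Fin 2) (GaloisField p 2), w ∈ 𝔥 → a • w ∈ 𝔥 →
      ∀ c : GaloisField p 2, c • w ∈ 𝔥 := by
    intro a ha w hw haw c
    have hinj : Function.Injective (algebraMap (ZMod p) (GaloisField p 2)) :=
      (algebraMap (ZMod p) (GaloisField p 2)).injective
    have hli : LinearIndependent (ZMod p) ![(1 : GaloisField p 2), a] := by
      rw [LinearIndependent.pair_iff]
      intro s t hst
      by_cases ht : t = 0
      · subst ht
        refine ⟨?_, rfl⟩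
        have h1 : algebraMap (ZMod p) (GaloisField p 2) s = 0 := by
          rw [Algebra.algebraMap_eq_smul_one]
          simpa using hst
        exact hinj (by simpa using h1)
      · exfalso
        apply ha
        refine ⟨-s / t, ?_⟩
        have h1 : algebraMap (ZMod p) (GaloisField p 2) s + algebraMap (ZMod p) (GaloisField p 2) t * a = 0 := by
          rw [Algebra.algebraMap_eq_smul_one, Algebra.algebraMap_eq_smul_one]
          rw [smul_mul_assoc, one_mul]
          simpa using hst
        have ht' : algebraMap (ZMod p) (GaloisField p 2) t ≠ 0 := fun h => ht (hinj (by simpa using h))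
        rw [map_div₀, map_neg]
        field_simp
        linear_combination -h1
    have hsp : Submodule.span (ZMod p) {(1 : GaloisField p 2), a} = ⊤ := by
      have hfr : Module.finrank (ZMod p) (GaloisField p 2) = 2 := GaloisField.finrank p (by norm_num)
      have hrange : Set.range ![(1 : GaloisField p 2), a] = {(1 : GaloisField p 2), a} := by
        simp [Matrix.range_cons, Matrix.range_empty, Set.pair_comm]
      apply Submodule.eq_top_of_finrank_eq
      rw [hfr, ← hrange, finrank_span_eq_card hli]
      simp
    have hc : c ∈ Submodule.span (ZMod p) {(1 : GaloisField p 2), a} := hsp ▸ Submodule.mem_top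
    obtain ⟨s, t, hst⟩ := Submodule.mem_span_pair.mp hc
    have : c • w = s • w + t • (a • w) := by
      rw [← hst, add_smul, smul_assoc, smul_assoc, one_smul]
    rw [this]
    exact 𝔥.add_mem (𝔥.smul_mem s hw) (𝔥.smul_mem t haw)
  -- bracket transfer lemmas
  have hbx : ∀ c : GaloisField p 2, c • x ∈ 𝔥 → c • h₀ ∈ 𝔥 := by
    intro c hc
    have hb := 𝔥.lie_mem hc hy𝔥
    rw [Ring.lie_def, smul_mul_assoc, mul_smul_comm, ← smul_sub] at hb
    exact hb
  have hby : ∀ c : GaloisField p 2, c • y ∈ 𝔥 → c • h₀ ∈ 𝔥 := by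
    intro c hc
    have hb := 𝔥.lie_mem hx𝔥 hc
    rw [Ring.lie_def, smul_mul_assoc, mul_smul_comm, ← smul_sub] at hb
    exact hb
  have hbh₀x : ∀ c : GaloisField p 2, c • h₀ ∈ 𝔥 → (2 * τ * c) • x ∈ 𝔥 := by
    intro c hc
    have hb := 𝔥.lie_mem hc hx𝔥
    rw [Ring.lie_def, smul_mul_assoc, mul_smul_comm, ← smul_sub,
      h0x' x y htx hx, xh0' x y htx hx] at hb
    have he : c • (τ • x - (-τ) • x) = (2 * τ * c) • x := by
      rw [neg_smul, sub_neg_eq_add, ← add_smul, smul_smul]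
      ring_nf
    rwa [he] at hb
  have hbh₀y : ∀ c : GaloisField p 2, c • h₀ ∈ 𝔥 → (2 * τ * c) • y ∈ 𝔥 := by
    intro c hc
    have hb := 𝔥.lie_mem hy𝔥 hc
    rw [Ring.lie_def, mul_smul_comm, smul_mul_assoc, ← smul_sub,
      yh0' x y hty hy, h0y' x y hty hy] at hb
    have he : c • (τ • y - (-τ) • y) = (2 * τ * c) • y := by
      rw [neg_smul, sub_neg_eq_add, ← add_smul, smul_smul]
      ring_nf
    rwa [he] at hb
  have h2τ2 : (2 * τ ^ 2 : GaloisField p 2) ≠ 0 := by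
    exact mul_ne_zero h2F (pow_ne_zero _ hτ0)
  have h2τ : (2 * τ : GaloisField p 2) ≠ 0 := mul_ne_zero h2F hτ0
  -- if all three lines are contained in 𝔥 then 𝔥 = sl2, contradiction
  have habsorb : (∀ c : GaloisField p 2, c • x ∈ 𝔥) → (∀ c : GaloisField p 2, c • y ∈ 𝔥) →
      (∀ c : GaloisField p 2, c • h₀ ∈ 𝔥) → False := by
    intro h1 h2 h3
    apply h𝔥'
    refine le_antisymm h𝔥 fun w hw => ?_
    have htw : Matrix.trace w = 0 := hw
    have hexp := expand_traceless' x y w htx hty htw hx hy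
    have hwrit : w = (2 * τ ^ 2)⁻¹ • ((2 * τ ^ 2) • w) := by
      rw [smul_smul, inv_mul_cancel₀ h2τ2, one_smul]
    rw [hwrit, hexp, smul_add, smul_add, smul_smul, smul_smul, smul_smul]
    exact 𝔥.add_mem (𝔥.add_mem (h1 _) (h2 _)) (h3 _)
  -- key lemmas: coefficients must lie in the prime field
  have hchainx : (∀ c : GaloisField p 2, c • x ∈ 𝔥) → False := by
    intro h1
    have h3 : ∀ c : GaloisField p 2, c • h₀ ∈ 𝔥 := fun c => hbx c (h1 c)
    have h2 : ∀ c : GaloisField p 2, c • y ∈ 𝔥 := by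
      intro c
      have hb := hbh₀y ((2 * τ)⁻¹ * c) (h3 _)
      rwa [← mul_assoc, mul_inv_cancel₀ h2τ, one_mul] at hb
    exact habsorb h1 h2 h3
  have hchainy : (∀ c : GaloisField p 2, c • y ∈ 𝔥) → False := by
    intro h2
    have h3 : ∀ c : GaloisField p 2, c • h₀ ∈ 𝔥 := fun c => hby c (h2 c)
    have h1 : ∀ c : GaloisField p 2, c • x ∈ 𝔥 := by
      intro c
      have hb := hbh₀x ((2 * τ)⁻¹ * c) (h3 _)
      rwa [← mul_assoc, mul_inv_cancel₀ h2τ, one_mul] at hb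
    exact habsorb h1 h2 h3
  have hchainh : (∀ c : GaloisField p 2, c • h₀ ∈ 𝔥) → False := by
    intro h3
    have h1 : ∀ c : GaloisField p 2, c • x ∈ 𝔥 := by
      intro c
      have hb := hbh₀x ((2 * τ)⁻¹ * c) (h3 _)
      rwa [← mul_assoc, mul_inv_cancel₀ h2τ, one_mul] at hb
    have h2 : ∀ c : GaloisField p 2, c • y ∈ 𝔥 := by
      intro c
      have hb := hbh₀y ((2 * τ)⁻¹ * c) (h3 _)
      rwa [← mul_assoc, mul_inv_cancel₀ h2τ, one_mul] at hb
    exact habsorb h1 h2 h3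
  have keyx : ∀ a : GaloisField p 2, a • x ∈ 𝔥 → a ∈ FP := by
    intro a ha
    by_contra hna
    exact hchainx (hspan a hna x hx𝔥 ha)
  have keyy : ∀ a : GaloisField p 2, a • y ∈ 𝔥 → a ∈ FP := by
    intro a ha
    by_contra hna
    exact hchainy (hspan a hna y hy𝔥 ha)
  have keyh : ∀ a : GaloisField p 2, a • h₀ ∈ 𝔥 → a ∈ FP := by
    intro a ha
    by_contra hna
    exact hchainh (hspan a hna h₀ hh0𝔥 ha)
  -- τ lies in the prime field
  have hτFP : τ ∈ FP := by
    have hb := hbh₀x 1 (by simpa using hh0𝔥)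
    have h1 : (2 * τ * 1 : GaloisField p 2) ∈ FP := keyx _ hb
    rw [mul_one] at h1
    have h2 := FP.mul_mem (FP.inv_mem h2FP) h1
    rwa [inv_mul_cancel_left₀ h2F] at h2
  -- expansion of any traceless matrix
  have hexpand : ∀ z : Matrix (Fin 2) (Fin 2) (GaloisField p 2), Matrix.trace z = 0 →
      z = (Matrix.trace (z * y) / τ) • x + (Matrix.trace (z * x) / τ) • y +
        (Matrix.trace (z * h₀) / (2 * τ ^ 2)) • h₀ := by
    intro z htz
    have h := expand_traceless' x y z htx hty htz hx hy
    calc z = (2 * τ ^ 2)⁻¹ • ((2 * τ ^ 2) • z) := by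
            rw [smul_smul, inv_mul_cancel₀ h2τ2, one_smul]
      _ = _ := by
            rw [h, smul_add, smul_add, smul_smul, smul_smul, smul_smul,
              show (2 * τ ^ 2)⁻¹ * (2 * τ * Matrix.trace (z * y))
                  = Matrix.trace (z * y) / τ by field_simp,
              show (2 * τ ^ 2)⁻¹ * (2 * τ * Matrix.trace (z * x))
                  = Matrix.trace (z * x) / τ by field_simp,
              show (2 * τ ^ 2)⁻¹ * Matrix.trace (z * (x * y - y * x))
                  = Matrix.trace (z * h₀) / (2 * τ ^ 2) by rw [← hh₀def]; field_simp]
  -- coordinates of elements of S lie in the prime field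
  have hcoord : ∀ z ∈ S, Matrix.trace (z * y) ∈ FP ∧ Matrix.trace (z * x) ∈ FP ∧
      Matrix.trace (z * h₀) ∈ FP := by
    intro z hz
    obtain ⟨htz, hzz, hz𝔥⟩ := hmem z hz
    have hhalf : ∀ b : GaloisField p 2, -(2 * b) ∈ FP → b ∈ FP := by
      intro b hb
      have h1 := FP.neg_mem hb
      rw [neg_neg] at h1
      have h2 := FP.mul_mem (FP.inv_mem h2FP) h1
      rwa [inv_mul_cancel_left₀ h2F] at h2
    have hv : Matrix.trace (z * x) ∈ FP := by
      have hb := 𝔥.lie_mem hx𝔥 (𝔥.lie_mem hx𝔥 hz𝔥)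
      rw [Ring.lie_def, Ring.lie_def, dbl' x z htx hx] at hb
      have h1 := keyx _ hb
      have h2 := hhalf _ h1
      rwa [Matrix.trace_mul_comm] at h2
    have hu : Matrix.trace (z * y) ∈ FP := by
      have hb := 𝔥.lie_mem hy𝔥 (𝔥.lie_mem hy𝔥 hz𝔥)
      rw [Ring.lie_def, Ring.lie_def, dbl' y z hty hy] at hb
      have h1 := keyy _ hb
      have h2 := hhalf _ h1
      rwa [Matrix.trace_mul_comm] at h2
    refine ⟨hu, hv, ?_⟩
    -- the h₀-coordinate
    have h1 : (Matrix.trace (z * y) / τ) • x ∈ 𝔥 := by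
      obtain ⟨s, hs⟩ := FP.div_mem hu hτFP
      rw [← hs, algebraMap_smul]
      exact 𝔥.smul_mem s hx𝔥
    have h2 : (Matrix.trace (z * x) / τ) • y ∈ 𝔥 := by
      obtain ⟨s, hs⟩ := FP.div_mem hv hτFP
      rw [← hs, algebraMap_smul]
      exact 𝔥.smul_mem s hy𝔥
    have h3 : (Matrix.trace (z * h₀) / (2 * τ ^ 2)) • h₀ ∈ 𝔥 := by
      have h4 := 𝔥.sub_mem (𝔥.sub_mem hz𝔥 h1) h2
      have h5 : z - (Matrix.trace (z * y) / τ) • x - (Matrix.trace (z * x) / τ) • y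
          = (Matrix.trace (z * h₀) / (2 * τ ^ 2)) • h₀ := by
        nth_rewrite 1 [hexpand z htz]
        abel
      rwa [h5] at h4
    have h6 := keyh _ h3
    have h7 := FP.mul_mem (FP.mul_mem h2FP (FP.mul_mem hτFP hτFP)) h6
    have h8 : 2 * (τ * τ) * (Matrix.trace (z * h₀) / (2 * τ ^ 2))
        = Matrix.trace (z * h₀) := by
      field_simp
    rwa [h8] at h7
  -- the conic relation
  have hcon : ∀ z ∈ S, Matrix.trace (z * h₀) ^ 2
      + 4 * τ * Matrix.trace (z * y) * Matrix.trace (z * x) = 0 := by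
    intro z hz
    obtain ⟨htz, hzz, -⟩ := hmem z hz
    have := conic_rel' x y z htx hty htz hx hy hzz
    rw [← hh₀def] at this
    linear_combination this
  -- the injection into Option FP
  have hFPfin : Finite ↥FP := by
    have : Finite (GaloisField p 2) := by infer_instance
    exact Subtype.finite
  let f : S → Option ↥FP := fun z =>
    if h : Matrix.trace ((z : Matrix (Fin 2) (Fin 2) (GaloisField p 2)) * x) = 0 then none
    else some ⟨Matrix.trace ((z : Matrix (Fin 2) (Fin 2) (GaloisField p 2)) * h₀)
        / (2 * τ * Matrix.trace ((z : Matrix (Fin 2) (Fin 2) (GaloisField p 2)) * x)),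
      FP.div_mem (hcoord z.1 z.2).2.2
        (FP.mul_mem (FP.mul_mem h2FP hτFP) (hcoord z.1 z.2).2.1)⟩
  have hinj : Function.Injective f := by
    rintro ⟨z, hz⟩ ⟨z', hz'⟩ heq
    obtain ⟨htz, hzz, hz𝔥⟩ := hmem z hz
    obtain ⟨htz', hzz', hz'𝔥⟩ := hmem z' hz'
    have hcz := hcon z hz
    have hcz' := hcon z' hz'
    rw [Subtype.mk.injEq]
    by_contra hne
    have hbr := hnc z hz z' hz' hne
    by_cases h1 : Matrix.trace (z * x) = 0 <;> by_cases h2 : Matrix.trace (z' * x) = 0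
    · -- both v = 0 : both are multiples of x
      have hw0 : Matrix.trace (z * h₀) = 0 := by
        have h3 : Matrix.trace (z * h₀) ^ 2 = 0 := by
          rw [h1] at hcz
          linear_combination hcz
        exact (pow_eq_zero_iff two_ne_zero).mp h3
      have hw0' : Matrix.trace (z' * h₀) = 0 := by
        have h3 : Matrix.trace (z' * h₀) ^ 2 = 0 := by
          rw [h2] at hcz'
          linear_combination hcz'
        exact (pow_eq_zero_iff two_ne_zero).mp h3
      have hz1 : z = (Matrix.trace (z * y) / τ) • x := by
        conv_lhs => rw [hexpand z htz]
        rw [h1, hw0, zero_div, zero_div, zero_smul, zero_smul, add_zero, add_zero]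
      have hz1' : z' = (Matrix.trace (z' * y) / τ) • x := by
        conv_lhs => rw [hexpand z' htz']
        rw [h2, hw0', zero_div, zero_div, zero_smul, zero_smul, add_zero, add_zero]
      apply hbr
      rw [hz1, hz1', smul_mul_assoc, mul_smul_comm, smul_mul_assoc, mul_smul_comm,
        smul_smul, smul_smul, mul_comm, sub_self]
    · simp [f, h1, h2] at heq
    · simp [f, h1, h2] at heq
    · -- both v ≠ 0
      have hval : Matrix.trace (z * h₀) / (2 * τ * Matrix.trace (z * x))
          = Matrix.trace (z' * h₀) / (2 * τ * Matrix.trace (z' * x)) := by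
        simp only [f, dif_neg h1, dif_neg h2, Option.some.injEq,
          Subtype.mk.injEq] at heq
        exact heq
      have hwv : Matrix.trace (z * h₀) * Matrix.trace (z' * x)
          = Matrix.trace (z' * h₀) * Matrix.trace (z * x) := by
        rw [div_eq_div_iff (mul_ne_zero h2τ h1) (mul_ne_zero h2τ h2)] at hval
        apply mul_left_cancel₀ h2τ
        linear_combination hval
      have hE : Matrix.trace (z' * y) * Matrix.trace (z * x)
          = Matrix.trace (z * y) * Matrix.trace (z' * x) := by
        have h4 : (4 * τ * Matrix.trace (z * x) * Matrix.trace (z' * x)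
            : GaloisField p 2) ≠ 0 := by
          refine mul_ne_zero (mul_ne_zero (mul_ne_zero ?_ hτ0) h1) h2
          intro h4'
          have h5 : ((4 : ℕ) : GaloisField p 2) = 0 := by push_cast; linear_combination h4'
          rw [CharP.cast_eq_zero_iff (GaloisField p 2) p] at h5
          have := Nat.le_of_dvd (by norm_num) h5
          omega
        apply mul_left_cancel₀ h4
        linear_combination (Matrix.trace (z * x) ^ 2) * hcz'
          + (-(Matrix.trace (z' * x) ^ 2)) * hcz
          + (Matrix.trace (z * x) * Matrix.trace (z' * h₀)
              + Matrix.trace (z' * x) * Matrix.trace (z * h₀)) * hwv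
      have g1 : (Matrix.trace (z' * x) / Matrix.trace (z * x)) * (Matrix.trace (z * y) / τ)
          = Matrix.trace (z' * y) / τ := by
        rw [div_mul_div_comm, div_eq_div_iff (mul_ne_zero h1 hτ0) hτ0]
        linear_combination (-τ) * hE
      have g2 : (Matrix.trace (z' * x) / Matrix.trace (z * x)) * (Matrix.trace (z * x) / τ)
          = Matrix.trace (z' * x) / τ := by
        rw [div_mul_div_comm, mul_comm (Matrix.trace (z' * x)) (Matrix.trace (z * x)),
          mul_div_mul_left _ _ h1]
      have g3 : (Matrix.trace (z' * x) / Matrix.trace (z * x))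
            * (Matrix.trace (z * h₀) / (2 * τ ^ 2))
          = Matrix.trace (z' * h₀) / (2 * τ ^ 2) := by
        rw [div_mul_div_comm, div_eq_div_iff (mul_ne_zero h1 h2τ2) h2τ2]
        linear_combination (2 * τ ^ 2) * hwv
      have hlam : z' = (Matrix.trace (z' * x) / Matrix.trace (z * x)) • z := by
        nth_rewrite 1 [hexpand z' htz']
        nth_rewrite 2 [hexpand z htz]
        rw [smul_add, smul_add, smul_smul, smul_smul, smul_smul, g1, g2, g3]
      apply hbr
      rw [hlam, mul_smul_comm, smul_mul_assoc, sub_self]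
  -- conclude by counting
  have hle := Nat.card_le_card_of_injective f hinj
  have hcard : Nat.card (Option ↥FP) = p + 1 := by
    rw [Finite.card_option]
    congr 1
    have he : ↥FP ≃ ↥(Set.range (algebraMap (ZMod p) (GaloisField p 2))) :=
      Equiv.subtypeEquivRight fun a => by
        simp [RingHom.mem_fieldRange, Set.mem_range, hFPdef]
    rw [Nat.card_congr he,
      Nat.card_range_of_injective (algebraMap (ZMod p) (GaloisField p 2)).injective,
      Nat.card_zmod]
  rwa [hcard] at hle
end

section
/- Let n ≥ 1, let V_n be the 𝒪_F-module of homogeneous polynomials of degree n in 𝒪_F[X,Y] with SL₂(𝒪_F) acting by linear substitution, and set N = ∏_{k=0}^{n} binom(n,k). Then for every nonzero ideal 𝔦 of 𝒪_F and every subgroup Δ with Γ(𝔦) ≤ Δ ≤ SL₂(𝒪_F), the coinvariants module V_n / W_Δ, where W_Δ is the subgroup of V_n generated by { γ·P − P : γ ∈ Δ, P ∈ V_n }, is a finite group of cardinality at most (N² · |𝔦|)^{n+1}. In particular the degree-0 group homology H₀(Δ; V_n) is finite with log |H₀(Δ; V_n)| = O(log |𝔦|). -/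
open NumberField MvPolynomial

/-- The action of `γ = [[a,b],[c,d]] ∈ SL₂(𝒪_F)` on polynomials in two variables by linear
substitution, `(γ·P)(X,Y) = P(aX + cY, bX + dY)`. -/
noncomputable def slSubst {F : Type*} [Field F] [NumberField F]
    (γ : Matrix.SpecialLinearGroup (Fin 2) (𝓞 F)) :
    MvPolynomial (Fin 2) (𝓞 F) →ₐ[𝓞 F] MvPolynomial (Fin 2) (𝓞 F) :=
  MvPolynomial.aeval
    (fun i => ∑ j : Fin 2, (γ : Matrix (Fin 2) (Fin 2) (𝓞 F)) j i • MvPolynomial.X j)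

section AuxNat

theorem aux_succ_le_choose : ∀ (n k : ℕ), k < n → k + 1 ≤ n.choose k := by
  intro n
  induction n with
  | zero => omega
  | succ n ih =>
    intro k hk
    cases k with
    | zero => simp
    | succ j =>
      rw [Nat.choose_succ_succ]
      have h1 : j + 1 ≤ n.choose j := ih j (by omega)
      have h2 : 0 < n.choose (j + 1) := Nat.choose_pos (by omega)
      simp only [Nat.succ_eq_add_one]
      omega

theorem aux_factorial_le_prod (n : ℕ) :
    n.factorial ≤ ∏ k ∈ Finset.range (n + 1), n.choose k := by
  rw [Finset.prod_range_succ, Nat.choose_self, mul_one,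
    ← Finset.prod_range_add_one_eq_factorial]
  exact Finset.prod_le_prod (fun i _ => Nat.zero_le _)
    (fun i hi => aux_succ_le_choose n i (Finset.mem_range.mp hi))

end AuxNat

section AuxPoly

variable {F : Type*} [Field F] [NumberField F]

/-- The monomial `X₀^(n-k) X₁^k`. -/
noncomputable def eMon (F : Type*) [Field F] [NumberField F] (n k : ℕ) :
    MvPolynomial (Fin 2) (𝓞 F) :=
  X 0 ^ (n - k) * X 1 ^ k

def uMat (t : 𝓞 F) : Matrix.SpecialLinearGroup (Fin 2) (𝓞 F) :=
  ⟨!![1, t; 0, 1], by simp [Matrix.det_fin_two_of]⟩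

def lMat (t : 𝓞 F) : Matrix.SpecialLinearGroup (Fin 2) (𝓞 F) :=
  ⟨!![1, 0; t, 1], by simp [Matrix.det_fin_two_of]⟩

theorem eMon_isHomogeneous {n k : ℕ} (hk : k ≤ n) : (eMon F n k).IsHomogeneous n := by
  have h := ((isHomogeneous_X (𝓞 F) (0 : Fin 2)).pow (n - k)).mul
    ((isHomogeneous_X (𝓞 F) (1 : Fin 2)).pow k)
  rw [show 1 * (n - k) + 1 * k = n by omega] at h
  exact h

theorem slSubst_uMat_X0 (t : 𝓞 F) : slSubst (uMat t) (X 0) = X 0 := by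
  simp [slSubst, uMat, Fin.sum_univ_two]

theorem slSubst_uMat_X1 (t : 𝓞 F) : slSubst (uMat t) (X 1) = C t * X 0 + X 1 := by
  simp [slSubst, uMat, Fin.sum_univ_two, smul_eq_C_mul]

theorem slSubst_lMat_X0 (t : 𝓞 F) : slSubst (lMat t) (X 0) = X 0 + C t * X 1 := by
  simp [slSubst, lMat, Fin.sum_univ_two, smul_eq_C_mul]

theorem slSubst_lMat_X1 (t : 𝓞 F) : slSubst (lMat t) (X 1) = X 1 := by
  simp [slSubst, lMat, Fin.sum_univ_two]

theorem slSubst_eMon (γ : Matrix.SpecialLinearGroup (Fin 2) (𝓞 F)) (n k : ℕ) :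
    slSubst γ (eMon F n k) = slSubst γ (X 0) ^ (n - k) * slSubst γ (X 1) ^ k := by
  simp [eMon, map_mul, map_pow]

theorem slSubst_eMon_isHomogeneous (γ : Matrix.SpecialLinearGroup (Fin 2) (𝓞 F))
    {n k : ℕ} (hk : k ≤ n) : (slSubst γ (eMon F n k)).IsHomogeneous n := by
  rw [slSubst_eMon]
  have key : ∀ i : Fin 2, (slSubst γ (X i) : MvPolynomial (Fin 2) (𝓞 F)).IsHomogeneous 1 := by
    intro i
    simp only [slSubst, aeval_X]
    rw [Fin.sum_univ_two]
    have h := (((isHomogeneous_C (Fin 2) ((γ : Matrix (Fin 2) (Fin 2) (𝓞 F)) 0 i)).mul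
        (isHomogeneous_X (𝓞 F) (0 : Fin 2)))).add
      (((isHomogeneous_C (Fin 2) ((γ : Matrix (Fin 2) (Fin 2) (𝓞 F)) 1 i)).mul
        (isHomogeneous_X (𝓞 F) (1 : Fin 2))))
    rw [zero_add] at h
    simpa [smul_eq_C_mul] using h
  have h := ((key 0).pow (n - k)).mul ((key 1).pow k)
  rw [show 1 * (n - k) + 1 * k = n by omega] at h
  exact h

theorem rel_u (t : 𝓞 F) {n k : ℕ} (hk : k ≤ n) :
    slSubst (uMat t) (eMon F n k) - eMon F n k =
      ∑ j ∈ Finset.Ico 1 (k + 1), ((k.choose j : 𝓞 F) * t ^ j) • eMon F n (k - j) := by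
  have hexp : slSubst (uMat t) (eMon F n k) =
      ∑ j ∈ Finset.range (k + 1), ((k.choose j : 𝓞 F) * t ^ j) • eMon F n (k - j) := by
    rw [slSubst_eMon, slSubst_uMat_X0, slSubst_uMat_X1, add_pow, Finset.mul_sum]
    refine Finset.sum_congr rfl fun j hj => ?_
    rw [Finset.mem_range] at hj
    have h1 : n - (k - j) = (n - k) + j := by omega
    simp only [eMon, h1, smul_eq_C_mul]
    rw [mul_pow, ← map_pow, map_mul, map_natCast]
    ring
  rw [hexp, Finset.range_eq_Ico, Finset.sum_eq_sum_Ico_succ_bot (by omega)]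
  simp

theorem rel_l (t : 𝓞 F) {n k : ℕ} (hk : k ≤ n) :
    slSubst (lMat t) (eMon F n k) - eMon F n k =
      ∑ j ∈ Finset.Ico 1 (n - k + 1), (((n - k).choose j : 𝓞 F) * t ^ j) • eMon F n (k + j) := by
  have hexp : slSubst (lMat t) (eMon F n k) =
      ∑ j ∈ Finset.range (n - k + 1), (((n - k).choose j : 𝓞 F) * t ^ j) • eMon F n (k + j) := by
    rw [slSubst_eMon, slSubst_lMat_X0, slSubst_lMat_X1, add_comm (X 0) (C t * X 1), add_pow,
      Finset.sum_mul]
    refine Finset.sum_congr rfl fun j hj => ?_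
    rw [Finset.mem_range] at hj
    have h1 : n - (k + j) = (n - k) - j := by omega
    simp only [eMon, h1, smul_eq_C_mul]
    rw [mul_pow, ← map_pow, map_mul, map_natCast]
    ring
  rw [hexp, Finset.range_eq_Ico, Finset.sum_eq_sum_Ico_succ_bot (by omega)]
  simp

theorem uMat_mem_ker (𝔦 : Ideal (𝓞 F)) {t : 𝓞 F} (ht : t ∈ 𝔦) :
    uMat t ∈ MonoidHom.ker (Matrix.SpecialLinearGroup.map (Ideal.Quotient.mk 𝔦)) := by
  rw [MonoidHom.mem_ker]
  apply Matrix.SpecialLinearGroup.ext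
  intro i j
  rw [Matrix.SpecialLinearGroup.map_apply_coe]
  simp only [Matrix.SpecialLinearGroup.map_apply_coe, RingHom.mapMatrix_apply,
    Matrix.map_apply, Matrix.SpecialLinearGroup.coe_one, uMat]
  fin_cases i <;> fin_cases j <;>
    simp [Matrix.one_apply, Ideal.Quotient.eq_zero_iff_mem.mpr ht]

theorem lMat_mem_ker (𝔦 : Ideal (𝓞 F)) {t : 𝓞 F} (ht : t ∈ 𝔦) :
    lMat t ∈ MonoidHom.ker (Matrix.SpecialLinearGroup.map (Ideal.Quotient.mk 𝔦)) := by
  rw [MonoidHom.mem_ker]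
  apply Matrix.SpecialLinearGroup.ext
  intro i j
  rw [Matrix.SpecialLinearGroup.map_apply_coe]
  simp only [Matrix.SpecialLinearGroup.map_apply_coe, RingHom.mapMatrix_apply,
    Matrix.map_apply, Matrix.SpecialLinearGroup.coe_one, lMat]
  fin_cases i <;> fin_cases j <;>
    simp [Matrix.one_apply, Ideal.Quotient.eq_zero_iff_mem.mpr ht]

theorem degree_fin2 (d : Fin 2 →₀ ℕ) : d.degree = d 0 + d 1 := by
  rw [Finsupp.degree_apply, Finset.sum_subset (Finset.subset_univ d.support)
    (by intro x _ hx; exact Finsupp.notMem_support_iff.mp hx)]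
  exact Fin.sum_univ_two d

/-- Exponent pattern of `X₀^(n-k) X₁^k`. -/
noncomputable def dE (n k : ℕ) : Fin 2 →₀ ℕ :=
  Finsupp.single 0 (n - k) + Finsupp.single 1 k

theorem eMon_eq_monomial (n k : ℕ) : eMon F n k = monomial (dE n k) (1 : 𝓞 F) := by
  rw [eMon, dE, X_pow_eq_monomial, X_pow_eq_monomial, monomial_mul, one_mul]

theorem span_homog {n : ℕ} {p : MvPolynomial (Fin 2) (𝓞 F)}
    (hp : p ∈ homogeneousSubmodule (Fin 2) (𝓞 F) n) :
    p = ∑ k ∈ Finset.range (n + 1), coeff (dE n k) p • eMon F n k := by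
  have hhom : p.IsHomogeneous n := (mem_homogeneousSubmodule _ _).mp hp
  have hsub : p.support ⊆ (Finset.range (n + 1)).image (dE n) := by
    intro d hd
    have hdeg : d.degree = n := by
      have h2 := hhom (MvPolynomial.mem_support_iff.mp hd)
      rw [← h2, Finsupp.degree_eq_weight_one]; rfl
    rw [degree_fin2] at hdeg
    refine Finset.mem_image.mpr ⟨d 1, Finset.mem_range.mpr (by omega), ?_⟩
    ext i
    fin_cases i <;> simp [dE, Finsupp.single_apply] <;> omega
  have hinj : ∀ x ∈ Finset.range (n + 1), ∀ y ∈ Finset.range (n + 1),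
      dE n x = dE n y → x = y := by
    intro x _ y _ hxy
    have h3 := DFunLike.congr_fun hxy (1 : Fin 2)
    simpa [dE, Finsupp.single_apply] using h3
  calc p = ∑ d ∈ p.support, monomial d (coeff d p) := (support_sum_monomial_coeff p).symm
    _ = ∑ d ∈ (Finset.range (n + 1)).image (dE n), monomial d (coeff d p) := by
        refine Finset.sum_subset hsub (fun d _ hd => ?_)
        rw [MvPolynomial.notMem_support_iff.mp hd, map_zero]
    _ = ∑ k ∈ Finset.range (n + 1), monomial (dE n k) (coeff (dE n k) p) :=
        Finset.sum_image hinj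
    _ = ∑ k ∈ Finset.range (n + 1), coeff (dE n k) p • eMon F n k := by
        refine Finset.sum_congr rfl (fun k _ => ?_)
        rw [eMon_eq_monomial, smul_monomial, smul_eq_mul, mul_one]

end AuxPoly

set_option maxHeartbeats 1000000 in
set_option synthInstance.maxHeartbeats 400000 in
/-- Let `V_n` (with `n ≥ 1`) be the homogeneous polynomials of degree `n`
in `𝒪_F[X,Y]`, `N = ∏_{k≤n} C(n,k)`.  For a nonzero ideal `𝔦` and a subgroup `Δ` with
`Γ(𝔦) ≤ Δ ≤ SL₂(𝒪_F)`, the coinvariants `V_n / W_Δ`, where `W_Δ` is the subgroup generated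
by `{γ·P − P : γ ∈ Δ, P ∈ V_n}`, form a finite group of order at most `(N²·|𝔦|)^{n+1}`. -/
theorem coinvariants_card_le (F : Type*) [Field F] [NumberField F]
    (hdeg : Module.finrank ℚ F = 2)
    (hcomplex : ∀ v : InfinitePlace F, v.IsComplex)
    (n : ℕ) (hn : 1 ≤ n)
    (N : ℕ) (hN : N = ∏ k ∈ Finset.range (n + 1), Nat.choose n k)
    (𝔦 : Ideal (𝓞 F)) (h𝔦 : 𝔦 ≠ ⊥)
    (Δ : Subgroup (Matrix.SpecialLinearGroup (Fin 2) (𝓞 F)))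
    (hΔ : MonoidHom.ker (Matrix.SpecialLinearGroup.map (Ideal.Quotient.mk 𝔦)) ≤ Δ)
    (W : AddSubgroup ↥(homogeneousSubmodule (Fin 2) (𝓞 F) n))
    (hW : W = AddSubgroup.closure
      {x : ↥(homogeneousSubmodule (Fin 2) (𝓞 F) n) |
        ∃ γ ∈ Δ, ∃ P : ↥(homogeneousSubmodule (Fin 2) (𝓞 F) n),
          (x : MvPolynomial (Fin 2) (𝓞 F)) = slSubst γ (P : MvPolynomial (Fin 2) (𝓞 F)) - P}) :
    Finite (↥(homogeneousSubmodule (Fin 2) (𝓞 F) n) ⧸ W) ∧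
      Nat.card (↥(homogeneousSubmodule (Fin 2) (𝓞 F) n) ⧸ W) ≤
        (N ^ 2 * Nat.card ((𝓞 F) ⧸ 𝔦)) ^ (n + 1) := by
  classical
  set Wm : AddSubgroup (MvPolynomial (Fin 2) (𝓞 F)) :=
    AddSubgroup.map (homogeneousSubmodule (Fin 2) (𝓞 F) n).subtype.toAddMonoidHom W with hWm
  -- transfer between `W` and `Wm`
  have hWm_iff : ∀ x : homogeneousSubmodule (Fin 2) (𝓞 F) n,
      ((x : MvPolynomial (Fin 2) (𝓞 F)) ∈ Wm ↔ x ∈ W) := by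
    intro x
    constructor
    · rintro ⟨y, hy, hyx⟩
      have : y = x := Subtype.ext hyx
      rwa [← this]
    · intro hx
      exact ⟨x, hx, rfl⟩
  -- generators lie in `Wm`
  have hgen : ∀ γ ∈ Δ, ∀ p : MvPolynomial (Fin 2) (𝓞 F), p.IsHomogeneous n →
      (slSubst γ p).IsHomogeneous n → slSubst γ p - p ∈ Wm := by
    intro γ hγ p hp himg
    have hx : slSubst γ p - p ∈ homogeneousSubmodule (Fin 2) (𝓞 F) n :=
      sub_mem ((mem_homogeneousSubmodule _ _).mpr himg)
        ((mem_homogeneousSubmodule _ _).mpr hp)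
    have hmemW : (⟨slSubst γ p - p, hx⟩ : homogeneousSubmodule (Fin 2) (𝓞 F) n) ∈ W := by
      rw [hW]
      exact AddSubgroup.subset_closure ⟨γ, hγ, ⟨p, (mem_homogeneousSubmodule _ _).mpr hp⟩, rfl⟩
    exact (hWm_iff _).mpr hmemW
  -- `Wm` is closed under scalar multiplication
  have hsmul : ∀ (r : 𝓞 F) (p : MvPolynomial (Fin 2) (𝓞 F)), p ∈ Wm → r • p ∈ Wm := by
    intro r p hp
    rw [hWm, hW, AddMonoidHom.map_closure] at hp ⊢
    induction hp using AddSubgroup.closure_induction with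
    | mem q hq =>
      obtain ⟨x, hx, rfl⟩ := hq
      obtain ⟨γ, hγ, P, hP⟩ := hx
      apply AddSubgroup.subset_closure
      refine ⟨r • x, ⟨γ, hγ, r • P, ?_⟩, ?_⟩
      · show ((r • x : homogeneousSubmodule (Fin 2) (𝓞 F) n) : MvPolynomial (Fin 2) (𝓞 F))
          = slSubst γ ↑(r • P) - ↑(r • P)
        simp only [SetLike.val_smul]
        rw [hP, map_smul, smul_sub]
      · show ((r • x : homogeneousSubmodule (Fin 2) (𝓞 F) n) : MvPolynomial (Fin 2) (𝓞 F))
          = r • (x : MvPolynomial (Fin 2) (𝓞 F))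
        simp only [SetLike.val_smul]
    | zero => simpa using zero_mem _
    | add x y hx hy ihx ihy => simpa [smul_add] using add_mem ihx ihy
    | neg x hx ihx => simpa [smul_neg] using neg_mem ihx
  -- step 1: the unipotent relations give `k! · t · e_{k-1} ∈ Wm`
  have key1 : ∀ k, 1 ≤ k → k ≤ n → ∀ t ∈ 𝔦,
      ((k.factorial : 𝓞 F) * t) • eMon F n (k - 1) ∈ Wm := by
    intro k
    induction k using Nat.strong_induction_on with
    | _ k ih =>
      intro hk1 hkn t ht
      have hrel : (∑ j ∈ Finset.Ico 1 (k + 1),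
          ((k.choose j : 𝓞 F) * t ^ j) • eMon F n (k - j)) ∈ Wm := by
        rw [← rel_u t hkn]
        exact hgen _ (hΔ (uMat_mem_ker 𝔦 ht)) _ (eMon_isHomogeneous hkn)
          (slSubst_eMon_isHomogeneous _ hkn)
      have hrel2 := hsmul (((k - 1).factorial : 𝓞 F)) _ hrel
      rw [Finset.smul_sum, Finset.sum_eq_sum_Ico_succ_bot (by omega)] at hrel2
      have h4 : (k - 1).factorial * k = k.factorial := by
        rw [mul_comm]; exact Nat.mul_factorial_pred (by omega)
      have hfirst : (((k - 1).factorial : 𝓞 F)) • (((k.choose 1 : 𝓞 F) * t ^ 1) • eMon F n (k - 1))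
          = ((k.factorial : 𝓞 F) * t) • eMon F n (k - 1) := by
        rw [smul_smul, Nat.choose_one_right, pow_one, ← mul_assoc, ← Nat.cast_mul, h4]
      have htail : ∀ j ∈ Finset.Ico 2 (k + 1),
          (((k - 1).factorial : 𝓞 F)) • (((k.choose j : 𝓞 F) * t ^ j) • eMon F n (k - j)) ∈ Wm := by
        intro j hj
        rw [Finset.mem_Ico] at hj
        obtain ⟨hj2, hjk⟩ := hj
        have hIH := ih (k - j + 1) (by omega) (by omega) (by omega) t ht
        rw [show k - j + 1 - 1 = k - j by omega] at hIH
        have hc := hsmul ((((k - 1).factorial * k.choose j / (k - j + 1).factorial : ℕ) : 𝓞 F)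
          * t ^ (j - 1)) _ hIH
        have hdvd : (k - j + 1).factorial ∣ (k - 1).factorial * k.choose j :=
          dvd_mul_of_dvd_left (Nat.factorial_dvd_factorial (by omega)) _
        have h5 : ((k - 1).factorial * k.choose j / (k - j + 1).factorial : ℕ)
            * (k - j + 1).factorial = (k - 1).factorial * k.choose j :=
          Nat.div_mul_cancel hdvd
        have h6 : t ^ (j - 1) * t = t ^ j := by
          rw [← pow_succ, show j - 1 + 1 = j by omega]
        have heq : ((((k - 1).factorial * k.choose j / (k - j + 1).factorial : ℕ) : 𝓞 F)
              * t ^ (j - 1)) • ((((k - j + 1).factorial : 𝓞 F) * t) • eMon F n (k - j))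
            = (((k - 1).factorial : 𝓞 F)) • (((k.choose j : 𝓞 F) * t ^ j) • eMon F n (k - j)) := by
          rw [smul_smul, smul_smul]
          congr 1
          calc (((k - 1).factorial * k.choose j / (k - j + 1).factorial : ℕ) : 𝓞 F)
                * t ^ (j - 1) * (((k - j + 1).factorial : 𝓞 F) * t)
              = ((((k - 1).factorial * k.choose j / (k - j + 1).factorial)
                  * (k - j + 1).factorial : ℕ) : 𝓞 F) * (t ^ (j - 1) * t) := by
                push_cast
                ring
            _ = (((k - 1).factorial * k.choose j : ℕ) : 𝓞 F) * t ^ j := by rw [h5, h6]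
            _ = ((k - 1).factorial : 𝓞 F) * ((k.choose j : 𝓞 F) * t ^ j) := by
                push_cast
                ring
        rw [heq] at hc
        exact hc
      have hsum_tail : (∑ j ∈ Finset.Ico 2 (k + 1),
          (((k - 1).factorial : 𝓞 F)) • (((k.choose j : 𝓞 F) * t ^ j) • eMon F n (k - j))) ∈ Wm :=
        AddSubgroup.sum_mem _ htail
      have hre : ((k.factorial : 𝓞 F) * t) • eMon F n (k - 1)
          = ((((k - 1).factorial : 𝓞 F)) • (((k.choose 1 : 𝓞 F) * t ^ 1) • eMon F n (k - 1))
            + ∑ j ∈ Finset.Ico 2 (k + 1),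
              (((k - 1).factorial : 𝓞 F)) • (((k.choose j : 𝓞 F) * t ^ j) • eMon F n (k - j)))
            - ∑ j ∈ Finset.Ico 2 (k + 1),
              (((k - 1).factorial : 𝓞 F)) • (((k.choose j : 𝓞 F) * t ^ j) • eMon F n (k - j)) := by
        rw [add_sub_cancel_right, hfirst]
      rw [hre]
      exact sub_mem hrel2 hsum_tail
  -- step 2: `t · e_n ∈ Wm`
  have key2 : ∀ t ∈ 𝔦, t • eMon F n n ∈ Wm := by
    intro t ht
    have hrel : (∑ j ∈ Finset.Ico 1 (n - (n - 1) + 1),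
        (((n - (n - 1)).choose j : 𝓞 F) * t ^ j) • eMon F n ((n - 1) + j)) ∈ Wm := by
      rw [← rel_l t (show n - 1 ≤ n by omega)]
      exact hgen _ (hΔ (lMat_mem_ker 𝔦 ht)) _ (eMon_isHomogeneous (by omega))
        (slSubst_eMon_isHomogeneous _ (by omega))
    rw [show n - (n - 1) = 1 by omega, Finset.sum_eq_sum_Ico_succ_bot (by omega),
      show Finset.Ico (1 + 1) (1 + 1) = ∅ from Finset.Ico_self _, Finset.sum_empty, add_zero,
      Nat.choose_self, pow_one, Nat.cast_one, one_mul, show n - 1 + 1 = n by omega] at hrel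
    exact hrel
  -- step 3: `n! · t · e_k ∈ Wm` for all `k ≤ n`
  have key3 : ∀ k ≤ n, ∀ t ∈ 𝔦, ((n.factorial : 𝓞 F) * t) • eMon F n k ∈ Wm := by
    intro k hk t ht
    by_cases hkn : k = n
    · subst hkn
      have hc := hsmul ((k.factorial : 𝓞 F)) _ (key2 t ht)
      rwa [smul_smul] at hc
    · have h1 := key1 (k + 1) (by omega) (by omega) t ht
      rw [show k + 1 - 1 = k from rfl] at h1
      have hc := hsmul (((n.factorial / (k + 1).factorial : ℕ) : 𝓞 F)) _ h1
      rw [smul_smul, ← mul_assoc, ← Nat.cast_mul,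
        Nat.div_mul_cancel (Nat.factorial_dvd_factorial (by omega))] at hc
      exact hc
  -- the ideal `J = (n!) · 𝔦`
  set J : Ideal (𝓞 F) := Ideal.span {(n.factorial : 𝓞 F)} * 𝔦 with hJ
  have hJmem : ∀ c ∈ J, ∀ k ≤ n, c • eMon F n k ∈ Wm := by
    intro c hc k hk
    refine Submodule.mul_induction_on hc (fun a ha t ht => ?_) (fun x y hx hy => ?_)
    · obtain ⟨r, hr⟩ := Ideal.mem_span_singleton'.mp ha
      have hre : (a * t) • eMon F n k = r • (((n.factorial : 𝓞 F) * t) • eMon F n k) := by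
        rw [smul_smul, ← hr]; ring_nf
      rw [hre]
      exact hsmul _ _ (key3 k hk t ht)
    · rw [add_smul]
      exact add_mem hx hy
  -- basis elements of `V`
  have hkle : ∀ k : Fin (n + 1), (k : ℕ) ≤ n := fun k => by omega
  let eV : Fin (n + 1) → homogeneousSubmodule (Fin 2) (𝓞 F) n := fun k =>
    ⟨eMon F n k, (mem_homogeneousSubmodule _ _).mpr (eMon_isHomogeneous (hkle k))⟩
  -- the per-coordinate maps into the quotient
  let f : Fin (n + 1) → (𝓞 F) →+ (homogeneousSubmodule (Fin 2) (𝓞 F) n ⧸ W) := fun k =>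
    (QuotientAddGroup.mk' W).comp (AddMonoidHom.mk' (fun c => c • eV k)
      (fun a b => add_smul a b (eV k)))
  have hf0 : ∀ (k : Fin (n + 1)) (c : 𝓞 F), c ∈ J → f k c = 0 := by
    intro k c hc
    have h1 : (c • eV k : homogeneousSubmodule (Fin 2) (𝓞 F) n) ∈ W := by
      refine (hWm_iff _).mp ?_
      have h2 : ((c • eV k : homogeneousSubmodule (Fin 2) (𝓞 F) n) :
          MvPolynomial (Fin 2) (𝓞 F)) = c • eMon F n k := rfl
      rw [h2]
      exact hJmem c hc k (hkle k)
    show QuotientAddGroup.mk' W (c • eV k) = 0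
    rwa [QuotientAddGroup.mk'_apply, QuotientAddGroup.eq_zero_iff]
  have hfdiff : ∀ (k : Fin (n + 1)) (c c' : 𝓞 F), c - c' ∈ J → f k c = f k c' := by
    intro k c c' h
    have h3 := hf0 k (c - c') h
    rw [map_sub, sub_eq_zero] at h3
    exact h3
  -- surjection from `(𝓞 F ⧸ J)^(n+1)` onto `V ⧸ W`
  let g : (Fin (n + 1) → (𝓞 F) ⧸ J) → (homogeneousSubmodule (Fin 2) (𝓞 F) n ⧸ W) :=
    fun x => ∑ k, f k (Quotient.out (x k))
  have hgsurj : Function.Surjective g := by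
    intro y
    obtain ⟨P, rfl⟩ := QuotientAddGroup.mk'_surjective W y
    obtain ⟨p, hp⟩ := P
    refine ⟨fun k => Ideal.Quotient.mk J (coeff (dE n (k : ℕ)) p), ?_⟩
    have hout : ∀ k : Fin (n + 1),
        f k (Quotient.out (Ideal.Quotient.mk J (coeff (dE n (k : ℕ)) p))) =
          f k (coeff (dE n (k : ℕ)) p) := by
      intro k
      apply hfdiff
      refine Ideal.Quotient.eq.mp ?_
      exact Quotient.out_eq _
    have hsum : (∑ k : Fin (n + 1), f k (coeff (dE n (k : ℕ)) p)) =
        QuotientAddGroup.mk' W ⟨p, hp⟩ := by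
      have hcomp : ∀ k : Fin (n + 1), f k (coeff (dE n (k : ℕ)) p) =
          QuotientAddGroup.mk' W ((coeff (dE n (k : ℕ)) p) • eV k) := fun k => rfl
      rw [Finset.sum_congr rfl (fun k _ => hcomp k), ← map_sum]
      congr 1
      apply Subtype.ext
      have hco : ((∑ k : Fin (n + 1), coeff (dE n (k : ℕ)) p • eV k :
          homogeneousSubmodule (Fin 2) (𝓞 F) n) : MvPolynomial (Fin 2) (𝓞 F))
          = ∑ k : Fin (n + 1), coeff (dE n (k : ℕ)) p • eMon F n (k : ℕ) := by
        rw [AddSubmonoidClass.coe_finset_sum]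
        exact Finset.sum_congr rfl (fun k _ => rfl)
      rw [hco, Fin.sum_univ_eq_sum_range (fun k => coeff (dE n k) p • eMon F n k) (n + 1)]
      exact (span_homog hp).symm
    have hg : g (fun k => Ideal.Quotient.mk J (coeff (dE n (k : ℕ)) p)) =
        ∑ k : Fin (n + 1), f k (Quotient.out (Ideal.Quotient.mk J (coeff (dE n (k : ℕ)) p))) := rfl
    rw [hg, Finset.sum_congr rfl (fun k _ => hout k), hsum]
  -- finiteness
  have hJne : J ≠ ⊥ := by
    rw [hJ, Ne, Ideal.mul_eq_bot]
    push_neg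
    refine ⟨fun h => ?_, h𝔦⟩
    have := Ideal.span_singleton_eq_bot.mp h
    exact Nat.cast_ne_zero.mpr (Nat.factorial_ne_zero n) this
  haveI : Fintype ((𝓞 F) ⧸ J) := @Fintype.ofFinite _ (Ideal.finiteQuotientOfFreeOfNeBot J hJne)
  haveI : Finite ((𝓞 F) ⧸ J) := Finite.of_fintype _
  haveI hfin : Finite (homogeneousSubmodule (Fin 2) (𝓞 F) n ⧸ W) := Finite.of_surjective g hgsurj
  refine ⟨hfin, ?_⟩
  -- cardinality computations
  have hcard1 : Nat.card (homogeneousSubmodule (Fin 2) (𝓞 F) n ⧸ W) ≤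
      Nat.card (Fin (n + 1) → (𝓞 F) ⧸ J) :=
    Nat.card_le_card_of_surjective g hgsurj
  have hcard2 : Nat.card (Fin (n + 1) → (𝓞 F) ⧸ J) = (Nat.card ((𝓞 F) ⧸ J)) ^ (n + 1) := by
    rw [Nat.card_pi, Finset.prod_const, Finset.card_univ, Fintype.card_fin]
  have hrank2 : Module.finrank ℤ (𝓞 F) = 2 := by
    rw [RingOfIntegers.rank, hdeg]
  have hnormfact : Ideal.absNorm (Ideal.span {(n.factorial : 𝓞 F)}) = n.factorial ^ 2 := by
    rw [Ideal.absNorm_span_singleton]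
    have h7 : ((n.factorial : ℕ) : 𝓞 F) = algebraMap ℤ (𝓞 F) (n.factorial : ℤ) := by
      simp
    rw [h7, Algebra.norm_algebraMap_of_basis (RingOfIntegers.basis F),
      ← Module.finrank_eq_card_chooseBasisIndex, hrank2]
    simp [Int.natAbs_pow]
  have hcardJ : Nat.card ((𝓞 F) ⧸ J) = n.factorial ^ 2 * Nat.card ((𝓞 F) ⧸ 𝔦) := by
    rw [← Submodule.cardQuot_apply, ← Ideal.absNorm_apply, hJ, _root_.map_mul, hnormfact,
      Ideal.absNorm_apply, Submodule.cardQuot_apply]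
  have hfactN : n.factorial ≤ N := by
    rw [hN]; exact aux_factorial_le_prod n
  calc Nat.card (homogeneousSubmodule (Fin 2) (𝓞 F) n ⧸ W)
      ≤ (Nat.card ((𝓞 F) ⧸ J)) ^ (n + 1) := by rw [← hcard2]; exact hcard1
    _ = (n.factorial ^ 2 * Nat.card ((𝓞 F) ⧸ 𝔦)) ^ (n + 1) := by rw [hcardJ]
    _ ≤ (N ^ 2 * Nat.card ((𝓞 F) ⧸ 𝔦)) ^ (n + 1) :=
        Nat.pow_le_pow_left (Nat.mul_le_mul_right _ (Nat.pow_le_pow_left hfactN 2)) _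
end
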